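/- For partitions β, α and any symmetric function g, Foulkes's identity holds: D_β(s_α · g) = Σ_λ s_{α/λ} · D_{β/λ}(g), where the sum is over all partitions λ. -/

import Mathlib

open scoped TensorProduct Classical

noncomputable section

/-- The single-row Young diagram with `k` boxes, whose Schur function is `h_k`
and whose power sum is `p_k`. -/
def rowDiagram (k : ℕ) : YoungDiagram :=
  YoungDiagram.ofRowLens [k] (List.Pairwise.sortedGE (List.pairwise_singleton _ k))

/-- The quantity `z_λ = ∏ i^{m_i} m_i!` attached to a partition (Young diagram). -/
def zee (μ : YoungDiagram) : ℚ :=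
  ((μ.rowLens.prod * (μ.rowLens.dedup.map fun i => (μ.rowLens.count i).factorial).prod : ℕ) : ℚ)

/-- The ring of symmetric functions over `ℚ`, presented with its Schur basis `s`,
its power-sum basis `p`, the Hall inner product (for which the Schur functions are
orthonormal and `⟨p_λ, p_μ⟩ = δ_{λμ} z_λ`), the skewing operators `D f` (adjoint of
multiplication by `f`), and the Kronecker product `kron`
(determined by `p_λ ∗ p_μ = δ_{λμ} z_λ p_λ`). -/
structure SymmFn (Λ : Type*) [CommRing Λ] [Algebra ℚ Λ] where
  /-- the Schur basis -/
  s : Module.Basis YoungDiagram ℚ Λ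
  /-- the power-sum basis -/
  p : Module.Basis YoungDiagram ℚ Λ
  /-- the Hall inner product -/
  inner : Λ →ₗ[ℚ] Λ →ₗ[ℚ] ℚ
  inner_symm : ∀ f g, inner f g = inner g f
  inner_schur : ∀ μ ν, inner (s μ) (s ν) = if μ = ν then 1 else 0
  inner_power : ∀ μ ν, inner (p μ) (p ν) = if μ = ν then zee μ else 0
  power_mul : ∀ μ : YoungDiagram, p μ = (μ.rowLens.map fun k => p (rowDiagram k)).prod
  /-- the skewing operator `D f`, adjoint of multiplication by `f` -/
  D : Λ → Λ →ₗ[ℚ] Λ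
  D_adjoint : ∀ f g h, inner (D f g) h = inner g (f * h)
  /-- the Kronecker (internal) product -/
  kron : Λ →ₗ[ℚ] Λ →ₗ[ℚ] Λ
  kron_power : ∀ μ ν, kron (p μ) (p ν) = if μ = ν then zee μ • p μ else 0

namespace SymmFn

variable {Λ : Type*} [CommRing Λ] [Algebra ℚ Λ] (S : SymmFn Λ)

/-- The operator `U f` of multiplication by `f`. -/
def U (_S : SymmFn Λ) (f : Λ) : Λ →ₗ[ℚ] Λ := LinearMap.mulLeft ℚ f

/-- The skew Schur function `s_{α/θ} = D_{s_θ}(s_α)`. -/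
def skew (α θ : YoungDiagram) : Λ := S.D (S.s θ) (S.s α)

/-! The power sum `p_k` acts by the derivation `D_{p_k}`: on `p_μ` it deletes one part `k`, with
factor `k m_k(μ)`, and this is compatible with `p_μ p_ν = p_{μ ∪ ν}`. Since `D_{fg} = D_f ∘ D_g`,
every `f` (a combination of products of `p_k`'s) then has a finite coproduct `∑ u_i ⊗ v_i` with
`D_f(xy) = ∑ D_{u_i}(x) D_{v_i}(y)`. Pairing with `1`, which is multiplicative, gives
`⟨f, xy⟩ = ∑ ⟨u_i, x⟩⟨v_i, y⟩`, hence `D_{s_λ} f = ∑ ⟨u_i, s_λ⟩ v_i`; expanding each `u_i` in the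
Schur basis yields `D_f(xy) = ∑_λ D_{s_λ}(x) D_{D_{s_λ} f}(y)`, and Foulkes's identity is the case
`f = s_β`, `x = s_α`. -/

def ofMultiset (M : Multiset ℕ) : YoungDiagram :=
  YoungDiagram.ofRowLens (M.sort (· ≥ ·)) (M.pairwise_sort _).sortedGE

lemma coe_rowLens_ofMultiset {M : Multiset ℕ} (hM : ∀ x ∈ M, 0 < x) :
    ((ofMultiset M).rowLens : Multiset ℕ) = M := by
  rw [ofMultiset, YoungDiagram.rowLens_ofRowLens_eq_self, Multiset.sort_eq]
  exact fun x hx => hM x ((Multiset.mem_sort _).1 hx)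

lemma ofMultiset_inj {M N : Multiset ℕ} (hM : ∀ x ∈ M, 0 < x) (hN : ∀ x ∈ N, 0 < x) :
    ofMultiset M = ofMultiset N ↔ M = N :=
  ⟨fun h => by rw [← coe_rowLens_ofMultiset hM, ← coe_rowLens_ofMultiset hN, h], congrArg _⟩

def zeeMultiset (M : Multiset ℕ) : ℕ :=
  M.prod * ∏ i ∈ M.toFinset, (M.count i).factorial

lemma zee_eq_zeeMultiset (μ : YoungDiagram) : zee μ = zeeMultiset μ.rowLens := by
  simp [zee, zeeMultiset, Finset.prod_eq_multiset_prod]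

lemma zeeMultiset_cons (k : ℕ) (M : Multiset ℕ) :
    zeeMultiset (k ::ₘ M) = k * (M.count k + 1) * zeeMultiset M := by
  set s := insert k M.toFinset
  have hM : ∏ i ∈ M.toFinset, (M.count i).factorial = ∏ i ∈ s, (M.count i).factorial :=
    Finset.prod_subset (Finset.subset_insert _ _) fun i _ hi => by
      rw [Multiset.count_eq_zero.2 (by simpa using hi), Nat.factorial_zero]
  have hks : k ∈ s := Finset.mem_insert_self _ _
  have herase : ∏ i ∈ s.erase k, ((k ::ₘ M).count i).factorial
      = ∏ i ∈ s.erase k, (M.count i).factorial :=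
    Finset.prod_congr rfl fun i hi => by rw [Multiset.count_cons_of_ne (Finset.ne_of_mem_erase hi)]
  rw [zeeMultiset, zeeMultiset, Multiset.toFinset_cons, hM, Multiset.prod_cons,
    ← Finset.mul_prod_erase _ _ hks, ← Finset.mul_prod_erase s _ hks, herase,
    Multiset.count_cons_self, Nat.factorial_succ]
  ring

lemma inner_s (x : Λ) (ν : YoungDiagram) : S.inner x (S.s ν) = S.s.repr x ν := by
  have : S.inner.flip (S.s ν) = S.s.coord ν := S.s.ext fun μ => by
    simp [S.inner_schur, Finsupp.single_apply, eq_comm]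
  exact LinearMap.congr_fun this x

lemma ext_inner_p {x y : Λ} (h : ∀ ρ, S.inner x (S.p ρ) = S.inner y (S.p ρ)) : x = y := by
  have hxy : S.inner x = S.inner y := S.p.ext h
  exact S.s.ext_elem fun ν => by rw [← inner_s, ← inner_s, hxy]

def pMultiset (M : Multiset ℕ) : Λ :=
  (M.map fun k => S.p (rowDiagram k)).prod

@[simp] lemma pMultiset_zero : S.pMultiset 0 = 1 := by simp [pMultiset]

lemma pMultiset_add (M N : Multiset ℕ) :
    S.pMultiset (M + N) = S.pMultiset M * S.pMultiset N := by
  simp [pMultiset]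

lemma pMultiset_cons (k : ℕ) (M : Multiset ℕ) :
    S.pMultiset (k ::ₘ M) = S.p (rowDiagram k) * S.pMultiset M := by
  simp [pMultiset]

lemma p_eq_pMultiset (μ : YoungDiagram) : S.p μ = S.pMultiset μ.rowLens := by
  rw [S.power_mul, pMultiset, Multiset.map_coe, Multiset.prod_coe]

lemma p_ofMultiset {M : Multiset ℕ} (hM : ∀ x ∈ M, 0 < x) :
    S.p (ofMultiset M) = S.pMultiset M := by
  rw [p_eq_pMultiset, coe_rowLens_ofMultiset hM]

lemma inner_pMultiset {M N : Multiset ℕ} (hM : ∀ x ∈ M, 0 < x) (hN : ∀ x ∈ N, 0 < x) :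
    S.inner (S.pMultiset M) (S.pMultiset N) = if M = N then (zeeMultiset M : ℚ) else 0 := by
  rw [← S.p_ofMultiset hM, ← S.p_ofMultiset hN, S.inner_power, zee_eq_zeeMultiset,
    coe_rowLens_ofMultiset hM]
  simp only [ofMultiset_inj hM hN]

lemma ext_inner_pMultiset {x y : Λ}
    (h : ∀ N, (∀ n ∈ N, 0 < n) → S.inner x (S.pMultiset N) = S.inner y (S.pMultiset N)) :
    x = y :=
  S.ext_inner_p fun ρ => by
    rw [p_eq_pMultiset]
    exact h _ fun n hn => ρ.pos_of_mem_rowLens n hn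

lemma D_add (f g : Λ) : S.D (f + g) = S.D f + S.D g :=
  LinearMap.ext fun x => S.ext_inner_p fun ρ => by
    simp only [LinearMap.add_apply, map_add, LinearMap.add_apply, S.D_adjoint, add_mul]

lemma D_smul (c : ℚ) (f : Λ) : S.D (c • f) = c • S.D f :=
  LinearMap.ext fun x => S.ext_inner_p fun ρ => by
    simp only [LinearMap.smul_apply, map_smul, S.D_adjoint, smul_mul_assoc]

lemma D_one : S.D 1 = LinearMap.id :=
  LinearMap.ext fun x => S.ext_inner_p fun ρ => by rw [S.D_adjoint, one_mul, LinearMap.id_apply]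

lemma D_D_apply (f g x : Λ) : S.D f (S.D g x) = S.D (f * g) x :=
  S.ext_inner_p fun ρ => by rw [S.D_adjoint, S.D_adjoint, S.D_adjoint, mul_assoc, mul_left_comm]

def Dₗ : Λ →ₗ[ℚ] Λ →ₗ[ℚ] Λ where
  toFun := S.D
  map_add' := S.D_add
  map_smul' := S.D_smul

@[simp] lemma Dₗ_apply (f : Λ) : S.Dₗ f = S.D f := rfl

lemma D_zero : S.D 0 = 0 := map_zero S.Dₗ

lemma D_p_row_pMultiset {k : ℕ} (hk : 0 < k) {M : Multiset ℕ} (hM : ∀ x ∈ M, 0 < x) :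
    S.D (S.p (rowDiagram k)) (S.pMultiset M)
      = ((k * M.count k : ℕ) : ℚ) • S.pMultiset (M.erase k) := by
  refine S.ext_inner_pMultiset fun N hN => ?_
  have hkN : ∀ x ∈ k ::ₘ N, 0 < x := by simpa [hk] using hN
  rw [S.D_adjoint, ← pMultiset_cons, map_smul, LinearMap.smul_apply, smul_eq_mul,
    S.inner_pMultiset hM hkN,
    S.inner_pMultiset (fun x hx => hM x (Multiset.mem_of_mem_erase hx)) hN]
  by_cases hMN : M = k ::ₘ N
  · subst hMN
    rw [if_pos rfl, Multiset.erase_cons_head, if_pos rfl, zeeMultiset_cons,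
      Multiset.count_cons_self]
    push_cast; ring
  rw [if_neg hMN]
  by_cases hkM : k ∈ M
  · rw [if_neg fun h => hMN (by rw [← h, Multiset.cons_erase hkM]), mul_zero]
  · rw [Multiset.count_eq_zero.2 hkM, mul_zero, Nat.cast_zero, zero_mul]

lemma count_smul_pMultiset_erase_add_left {a : ℕ} {M N : Multiset ℕ} :
    (M.count a : ℚ) • S.pMultiset ((M + N).erase a)
      = (M.count a : ℚ) • S.pMultiset (M.erase a + N) := by
  by_cases ha : a ∈ M
  · rw [Multiset.erase_add_left_pos _ ha]
  · rw [Multiset.count_eq_zero.2 ha, Nat.cast_zero, zero_smul, zero_smul]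

lemma count_smul_pMultiset_erase_add_right {a : ℕ} {M N : Multiset ℕ} :
    (N.count a : ℚ) • S.pMultiset ((M + N).erase a)
      = (N.count a : ℚ) • S.pMultiset (M + N.erase a) := by
  rw [add_comm M, add_comm M, count_smul_pMultiset_erase_add_left]

lemma D_p_row_pMultiset_mul {k : ℕ} (hk : 0 < k) {M N : Multiset ℕ} (hM : ∀ x ∈ M, 0 < x)
    (hN : ∀ x ∈ N, 0 < x) :
    S.D (S.p (rowDiagram k)) (S.pMultiset M * S.pMultiset N)
      = S.D (S.p (rowDiagram k)) (S.pMultiset M) * S.pMultiset N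
        + S.pMultiset M * S.D (S.p (rowDiagram k)) (S.pMultiset N) := by
  have hMN : ∀ x ∈ M + N, 0 < x := fun x hx => (Multiset.mem_add.1 hx).elim (hM x) (hN x)
  rw [← pMultiset_add, S.D_p_row_pMultiset hk hMN, S.D_p_row_pMultiset hk hM,
    S.D_p_row_pMultiset hk hN, smul_mul_assoc, mul_smul_comm, ← pMultiset_add, ← pMultiset_add]
  push_cast
  rw [Multiset.count_add, Nat.cast_add, mul_add, add_smul, mul_smul, mul_smul, mul_smul,
    mul_smul, count_smul_pMultiset_erase_add_left, count_smul_pMultiset_erase_add_right]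

lemma D_p_row_mul {k : ℕ} (hk : 0 < k) (x y : Λ) :
    S.D (S.p (rowDiagram k)) (x * y)
      = S.D (S.p (rowDiagram k)) x * y + x * S.D (S.p (rowDiagram k)) y := by
  let d := S.D (S.p (rowDiagram k))
  suffices h : (LinearMap.mul ℚ Λ).compr₂ d
      = (LinearMap.mul ℚ Λ).compl₁₂ d LinearMap.id + (LinearMap.mul ℚ Λ).compl₁₂ LinearMap.id d by
    simpa using LinearMap.congr_fun₂ h x y
  refine LinearMap.ext_basis S.p S.p fun a b => ?_
  simp only [LinearMap.compr₂_apply, LinearMap.add_apply, LinearMap.compl₁₂_apply,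
    LinearMap.mul_apply', LinearMap.id_apply, d, p_eq_pMultiset S a, p_eq_pMultiset S b]
  exact S.D_p_row_pMultiset_mul hk (a.pos_of_mem_rowLens · ·) (b.pos_of_mem_rowLens · ·)

/-- `Δ f = ∑ i, u i ⊗ v i`, expressed through the action of `D` on products. -/
def HasCoproduct (f : Λ) : Prop :=
  ∃ (ι : Type) (_ : Fintype ι) (u v : ι → Λ),
    ∀ x y : Λ, S.D f (x * y) = ∑ i, S.D (u i) x * S.D (v i) y

lemma hasCoproduct_zero : S.HasCoproduct 0 :=
  ⟨Empty, inferInstance, Empty.elim, Empty.elim, fun x y => by simp [S.D_zero]⟩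

lemma hasCoproduct_one : S.HasCoproduct 1 :=
  ⟨Unit, inferInstance, fun _ => 1, fun _ => 1, fun x y => by simp [S.D_one]⟩

lemma hasCoproduct_p_row {k : ℕ} (hk : 0 < k) : S.HasCoproduct (S.p (rowDiagram k)) :=
  ⟨Bool, inferInstance, fun i => if i then S.p (rowDiagram k) else 1,
    fun i => if i then 1 else S.p (rowDiagram k), fun x y => by
      simp [S.D_p_row_mul hk, S.D_one, add_comm]⟩

lemma hasCoproduct_add {f g : Λ} (hf : S.HasCoproduct f) (hg : S.HasCoproduct g) :
    S.HasCoproduct (f + g) := by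
  obtain ⟨ι, _, u, v, hf⟩ := hf
  obtain ⟨κ, _, a, b, hg⟩ := hg
  exact ⟨ι ⊕ κ, inferInstance, Sum.elim u a, Sum.elim v b, fun x y => by
    simp [S.D_add, hf, hg, Fintype.sum_sum_type]⟩

lemma hasCoproduct_smul (c : ℚ) {f : Λ} (hf : S.HasCoproduct f) : S.HasCoproduct (c • f) := by
  obtain ⟨ι, _, u, v, hf⟩ := hf
  exact ⟨ι, inferInstance, c • u, v, fun x y => by
    simp [S.D_smul, hf, Finset.smul_sum]⟩

lemma hasCoproduct_mul {f g : Λ} (hf : S.HasCoproduct f) (hg : S.HasCoproduct g) :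
    S.HasCoproduct (f * g) := by
  obtain ⟨ι, _, u, v, hf⟩ := hf
  obtain ⟨κ, _, a, b, hg⟩ := hg
  refine ⟨ι × κ, inferInstance, fun q => u q.1 * a q.2, fun q => v q.1 * b q.2, fun x y => ?_⟩
  simp only [← S.D_D_apply, hg, map_sum, hf, Fintype.sum_prod_type_right]

lemma hasCoproduct_pMultiset {M : Multiset ℕ} (hM : ∀ x ∈ M, 0 < x) :
    S.HasCoproduct (S.pMultiset M) := by
  induction M using Multiset.induction_on with
  | empty => simpa using S.hasCoproduct_one
  | cons k M ih =>
    rw [pMultiset_cons]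
    exact S.hasCoproduct_mul (S.hasCoproduct_p_row (hM k (Multiset.mem_cons_self _ _)))
      (ih fun x hx => hM x (Multiset.mem_cons_of_mem hx))

lemma hasCoproduct (f : Λ) : S.HasCoproduct f := by
  have hf : f ∈ Submodule.span ℚ (Set.range S.p) := by simp [S.p.span_eq]
  induction hf using Submodule.span_induction with
  | mem x hx =>
    obtain ⟨μ, rfl⟩ := hx
    rw [p_eq_pMultiset]
    exact S.hasCoproduct_pMultiset (μ.pos_of_mem_rowLens · ·)
  | zero => exact S.hasCoproduct_zero
  | add x y _ _ hx hy => exact S.hasCoproduct_add hx hy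
  | smul c x _ hx => exact S.hasCoproduct_smul c hx

lemma inner_mul_one (x y : Λ) : S.inner (x * y) 1 = S.inner x 1 * S.inner y 1 := by
  suffices h : (LinearMap.mul ℚ Λ).compr₂ (S.inner.flip 1)
      = (LinearMap.mul ℚ ℚ).compl₁₂ (S.inner.flip 1) (S.inner.flip 1) by
    simpa using LinearMap.congr_fun₂ h x y
  refine LinearMap.ext_basis S.p S.p fun a b => ?_
  have ha : ∀ x ∈ (a.rowLens : Multiset ℕ), 0 < x := (a.pos_of_mem_rowLens · ·)
  have hb : ∀ x ∈ (b.rowLens : Multiset ℕ), 0 < x := (b.pos_of_mem_rowLens · ·)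
  have hab : ∀ x ∈ (a.rowLens + b.rowLens : Multiset ℕ), 0 < x :=
    fun x hx => (Multiset.mem_add.1 hx).elim (ha x) (hb x)
  have h0 : ∀ x ∈ (0 : Multiset ℕ), 0 < x := by simp
  simp only [LinearMap.compr₂_apply, LinearMap.compl₁₂_apply, LinearMap.mul_apply',
    LinearMap.flip_apply, p_eq_pMultiset S a, p_eq_pMultiset S b, ← pMultiset_add,
    ← S.pMultiset_zero, S.inner_pMultiset hab h0, S.inner_pMultiset ha h0,
    S.inner_pMultiset hb h0, add_eq_zero]
  split_ifs <;> simp_all [zeeMultiset]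

lemma inner_D_one (u x : Λ) : S.inner (S.D u x) 1 = S.inner u x := by
  rw [S.D_adjoint, mul_one, S.inner_symm]

lemma inner_mul_eq_sum {f : Λ} {ι : Type} [Fintype ι] {u v : ι → Λ}
    (hf : ∀ x y : Λ, S.D f (x * y) = ∑ i, S.D (u i) x * S.D (v i) y) (x y : Λ) :
    S.inner f (x * y) = ∑ i, S.inner (u i) x * S.inner (v i) y := by
  simp only [← S.inner_D_one f, hf, map_sum, LinearMap.sum_apply, inner_mul_one, inner_D_one]

lemma D_s_eq_sum {f : Λ} {ι : Type} [Fintype ι] {u v : ι → Λ}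
    (hf : ∀ x y : Λ, S.D f (x * y) = ∑ i, S.D (u i) x * S.D (v i) y) (l : YoungDiagram) :
    S.D (S.s l) f = ∑ i, S.s.repr (u i) l • v i :=
  S.ext_inner_p fun ρ => by
    simp [S.D_adjoint, S.inner_mul_eq_sum hf, inner_s]

lemma D_eq_finsum_repr (u x : Λ) : S.D u x = ∑ᶠ l, S.s.repr u l • S.D (S.s l) x := by
  rw [finsum_eq_sum_of_support_subset (s := (S.s.repr u).support) _
    fun l hl => Finsupp.mem_support_iff.2 (left_ne_zero_of_smul hl)]
  conv_lhs => rw [← S.s.linearCombination_repr u]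
  simp [Finsupp.linearCombination_apply, Finsupp.sum, ← Dₗ_apply, map_sum]

lemma D_mul (f x y : Λ) :
    S.D f (x * y) = ∑ᶠ l, S.D (S.s l) x * S.D (S.D (S.s l) f) y := by
  obtain ⟨ι, _, u, v, hf⟩ := S.hasCoproduct f
  have hfin : ∀ i (F : YoungDiagram → Λ),
      Function.HasFiniteSupport fun l => S.s.repr (u i) l • F l :=
    fun i F => (S.s.repr (u i)).hasFiniteSupport.smul_left F
  calc S.D f (x * y) = ∑ i, S.D (u i) x * S.D (v i) y := hf x y
    _ = ∑ i, ∑ᶠ l, S.s.repr (u i) l • (S.D (S.s l) x * S.D (v i) y) :=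
        Finset.sum_congr rfl fun i _ => by
          simp only [S.D_eq_finsum_repr (u i), finsum_mul' _ _ (hfin i _), smul_mul_assoc]
    _ = ∑ᶠ l, ∑ i, S.s.repr (u i) l • (S.D (S.s l) x * S.D (v i) y) :=
        sum_finsum_comm _ _ fun i _ => hfin i _
    _ = ∑ᶠ l, S.D (S.s l) x * S.D (S.D (S.s l) f) y :=
        finsum_congr fun l => by
          rw [S.D_s_eq_sum hf l, ← S.Dₗ_apply (∑ i, _), map_sum, LinearMap.sum_apply,
            Finset.mul_sum]
          simp only [map_smul, LinearMap.smul_apply, Dₗ_apply, mul_smul_comm]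

/-- Foulkes's identity: `D_β(s_α · g) = ∑_λ s_{α/λ} · D_{s_{β/λ}}(g)`. -/
theorem foulkes (α β : YoungDiagram) (g : Λ) :
    S.D (S.s β) (S.s α * g) = ∑ᶠ l : YoungDiagram, S.skew α l * S.D (S.skew β l) g :=
  S.D_mul (S.s β) (S.s α) g

end SymmFn
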